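/- arXiv:2012.10784 — 7 statements merged into one kernel-verified Lean document; each statement's English description precedes it below -/
import Mathlib

section
/- Let q(x,y) = a x² + b x y + c y² be an integral binary quadratic form with a ≠ 0, c ≠ 0, and discriminant Δ = b² − 4ac = δ² for some positive integer δ. Let k be a nonzero integer. Then the equation q(x,y) = k has at most 4 solutions (x,y) ∈ ℤ² satisfying |x| ≤ |k|^{1/4}/δ. -/
private lemma key_id (a b c δ k x y : ℤ)
    (h : a * x ^ 2 + b * x * y + c * y ^ 2 = k) (hΔ : b ^ 2 - 4 * a * c = δ ^ 2) :
    (2 * c * y + b * x) ^ 2 = 4 * (c * k) + δ ^ 2 * x ^ 2 := by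
  linear_combination 4 * c * h + x ^ 2 * hΔ

private lemma no_lt (c k s s' m m' : ℤ) (hck : c * k ≠ 0) (hk2 : |k| ≤ |c * k|)
    (hm : 0 ≤ m) (hm' : 0 ≤ m') (hmk : m ^ 2 ≤ |k|) (hm'k : m' ^ 2 ≤ |k|)
    (hs : s ^ 2 = 4 * (c * k) + m) (hs' : s' ^ 2 = 4 * (c * k) + m')
    (hlt : s ^ 2 < s' ^ 2) : False := by
  have habs : |s| < |s'| := by
    nlinarith [abs_nonneg s, abs_nonneg s', sq_abs s, sq_abs s']
  have h2 : |s| + 1 ≤ |s'| := habs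
  have hks : 0 ≤ |k| := abs_nonneg k
  have h3 : (|s| + 1) ^ 2 ≤ |s'| ^ 2 := by
    have := abs_nonneg s
    nlinarith
  have h4 : 2 * |s| + 1 ≤ m' := by nlinarith [sq_abs s, sq_abs s']
  have h5 : 4 * s ^ 2 ≤ (m' - 1) ^ 2 := by
    have hf : 0 ≤ (m' - 1 - 2 * |s|) * (m' - 1 + 2 * |s|) := by
      have := abs_nonneg s
      apply mul_nonneg <;> linarith
    nlinarith [sq_abs s]
  have h6 : 4 * s ^ 2 + 4 * |s| + 1 ≤ |k| := by nlinarith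
  have h7 : m' ≤ |k| := by nlinarith
  rcases lt_or_gt_of_ne hck with hneg | hpos
  · have hab : |c * k| = -(c * k) := abs_of_neg hneg
    nlinarith [abs_nonneg s]
  · have hab : |c * k| = c * k := abs_of_pos hpos
    nlinarith [abs_nonneg s]

/-- A binary quadratic form of positive square discriminant `δ²` with `a ≠ 0`,
`c ≠ 0` represents a nonzero integer `k` with at most 4 solutions satisfying
`|x| ≤ |k|^(1/4)/δ`. -/
theorem stmt_9 (a b c δ k : ℤ) (ha : a ≠ 0) (hc : c ≠ 0) (hδ : 0 < δ)
    (hΔ : b ^ 2 - 4 * a * c = δ ^ 2) (hk : k ≠ 0) :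
    {x : ℤ × ℤ | a * x.1 ^ 2 + b * x.1 * x.2 + c * x.2 ^ 2 = k ∧
        (|x.1| : ℝ) ≤ (|k| : ℝ) ^ ((1 : ℝ) / 4) / (δ : ℝ)}.encard ≤ 4 := by
  set S := {x : ℤ × ℤ | a * x.1 ^ 2 + b * x.1 * x.2 + c * x.2 ^ 2 = k ∧
        (|x.1| : ℝ) ≤ (|k| : ℝ) ^ ((1 : ℝ) / 4) / (δ : ℝ)} with hS
  have hck : c * k ≠ 0 := mul_ne_zero hc hk
  have hk2 : |k| ≤ |c * k| := by
    rw [abs_mul]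
    exact le_mul_of_one_le_left (abs_nonneg k) (Int.one_le_abs hc)
  have hbound : ∀ p ∈ S, (δ ^ 2 * p.1 ^ 2) ^ 2 ≤ |k| := by
    rintro ⟨x, y⟩ ⟨_, hx⟩
    have hδR : (0 : ℝ) < (δ : ℝ) := by exact_mod_cast hδ
    have h1 : (δ : ℝ) * |(x : ℝ)| ≤ (|k| : ℝ) ^ ((1 : ℝ) / 4) := by
      rw [le_div_iff₀ hδR] at hx
      push_cast at hx ⊢
      linarith [hx]
    have h4 : ((δ : ℝ) * |(x : ℝ)|) ^ (4 : ℕ) ≤ ((|k| : ℝ) ^ ((1 : ℝ) / 4)) ^ (4 : ℕ) := by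
      apply pow_le_pow_left₀ (by positivity) h1
    have hkpos : (0 : ℝ) ≤ (|k| : ℝ) := by positivity
    rw [← Real.rpow_natCast ((|k| : ℝ) ^ ((1 : ℝ) / 4)) 4, ← Real.rpow_mul hkpos] at h4
    norm_num at h4
    have heq : ((δ : ℝ) * |(x : ℝ)|) ^ (4 : ℕ) = (((δ : ℤ) ^ 2 * (x : ℤ) ^ 2 : ℤ) : ℝ) ^ 2 := by
      push_cast
      rw [show ((δ : ℝ) * |(x : ℝ)|) ^ (4 : ℕ) = ((δ:ℝ)^2 * (|(x:ℝ)|^2))^2 by ring, sq_abs]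
    rw [heq] at h4
    have : (((δ ^ 2 * x ^ 2) ^ 2 : ℤ) : ℝ) ≤ ((|k| : ℤ) : ℝ) := by push_cast at h4 ⊢; linarith
    exact_mod_cast this
  have hsq : ∀ p ∈ S, ∀ q ∈ S,
      (2 * c * p.2 + b * p.1) ^ 2 = (2 * c * q.2 + b * q.1) ^ 2 := by
    rintro ⟨x, y⟩ hp ⟨x', y'⟩ hq
    have e1 := key_id a b c δ k x y hp.1 hΔ
    have e2 := key_id a b c δ k x' y' hq.1 hΔ
    have b1 := hbound _ hp
    have b2 := hbound _ hq
    simp only at b1 b2 ⊢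
    rcases lt_trichotomy ((2 * c * y + b * x) ^ 2) ((2 * c * y' + b * x') ^ 2) with h | h | h
    · exact absurd h (fun h => no_lt c k _ _ _ _ hck hk2 (by positivity) (by positivity) b1 b2 e1 e2 h)
    · exact h
    · exact absurd h (fun h => no_lt c k _ _ _ _ hck hk2 (by positivity) (by positivity) b2 b1 e2 e1 h)
  rcases S.eq_empty_or_nonempty with hE | ⟨⟨x₀, y₀⟩, h₀⟩
  · rw [hE]; simp
  · have hinj : Set.InjOn
        (fun p : ℤ × ℤ => (decide (p.1 = x₀), decide (2 * c * p.2 + b * p.1 = 2 * c * y₀ + b * x₀)))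
        S := by
      rintro ⟨x, y⟩ hp ⟨x', y'⟩ hq hfeq
      simp only [Prod.mk.injEq, decide_eq_decide] at hfeq
      obtain ⟨f1, f2⟩ := hfeq
      have e1 := key_id a b c δ k x y hp.1 hΔ
      have e2 := key_id a b c δ k x' y' hq.1 hΔ
      have e0 := key_id a b c δ k x₀ y₀ h₀.1 hΔ
      have h12 := hsq _ hp _ hq
      have h10 := hsq _ hp _ h₀
      simp only at h12 h10
      have hδ2 : (0 : ℤ) < δ ^ 2 := by positivity
      have hx2 : x ^ 2 = x' ^ 2 := by nlinarith [h12, e1, e2]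
      have hx00 : x ^ 2 = x₀ ^ 2 := by nlinarith [h10, e1, e0]
      have hxx : x = x' := by
        by_cases hx : x = x₀
        · rw [hx, f1.mp hx]
        · have hx' : ¬ x' = x₀ := fun h => hx (f1.mpr h)
          have hz : (x - x₀) * (x + x₀) = 0 := by linear_combination hx00
          have h1 : x = -x₀ := by
            rcases mul_eq_zero.mp hz with h | h
            · exact absurd (by linarith) hx
            · linarith
          have hz' : (x' - x₀) * (x' + x₀) = 0 := by linear_combination hx2.symm.trans hx00
          have h2 : x' = -x₀ := by
            rcases mul_eq_zero.mp hz' with h | h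
            · exact absurd (by linarith) hx'
            · linarith
          rw [h1, h2]
      have hss : 2 * c * y + b * x = 2 * c * y' + b * x' := by
        by_cases hs : 2 * c * y + b * x = 2 * c * y₀ + b * x₀
        · rw [hs, f2.mp hs]
        · have hs' : ¬ 2 * c * y' + b * x' = 2 * c * y₀ + b * x₀ := fun h => hs (f2.mpr h)
          have hz : (2 * c * y + b * x - (2 * c * y₀ + b * x₀)) *
              (2 * c * y + b * x + (2 * c * y₀ + b * x₀)) = 0 := by linear_combination h10
          have h1 : 2 * c * y + b * x = -(2 * c * y₀ + b * x₀) := by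
            rcases mul_eq_zero.mp hz with h | h
            · exact absurd (by linarith) hs
            · linarith
          have hz' : (2 * c * y' + b * x' - (2 * c * y₀ + b * x₀)) *
              (2 * c * y' + b * x' + (2 * c * y₀ + b * x₀)) = 0 := by
            linear_combination h12.symm.trans h10
          have h2 : 2 * c * y' + b * x' = -(2 * c * y₀ + b * x₀) := by
            rcases mul_eq_zero.mp hz' with h | h
            · exact absurd (by linarith) hs'
            · linarith
          rw [h1, h2]
      have hyy : y = y' := by
        have h2c : (2 : ℤ) * c ≠ 0 := by simp [hc]
        have : 2 * c * y = 2 * c * y' := by rw [hxx] at hss; linarith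
        exact mul_left_cancel₀ h2c this
      exact Prod.ext hxx hyy
    have hle := Set.encard_le_encard_of_injOn (Set.mapsTo_univ _ S) hinj
    refine hle.trans ?_
    rw [Set.encard_univ]
    simp
end

section
/- Let q(m,n) = a m² + b m n + c n² be an integral binary quadratic form with a ≠ 0 and discriminant Δ = b² − 4ac = δ² for some positive integer δ. Then there exist integers a₁, a₂, c₁, c₂ with a = a₁·a₂, c = c₁·c₂, b = a₁c₁ + a₂c₂, and δ = a₂c₂ − a₁c₁, so that a m² + b m n + c n² = (a₂ m + c₁ n)·(a₁ m + c₂ n) for all integers m, n. -/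
/-!
Since `b² - δ² = 4ac`, the integers `b` and `δ` have the same parity, so `b = u + v` and
`δ = u - v` with `uv = ac`. The four-number lemma splits `uv = ac` as `a = a₁a₂`, `c = c₁c₂`,
`v = a₁c₁`, `u = a₂c₂`, and the factorization of the form is then a polynomial identity.
-/

theorem exists_mul_eq_of_mul_eq_mul {α : Type*} [CommMonoidWithZero α]
    [IsCancelMulZero α] [DecompositionMonoid α] {a c u v : α} (h : u * v = a * c) :
    ∃ a₁ a₂ c₁ c₂ : α, a = a₁ * a₂ ∧ c = c₁ * c₂ ∧ v = a₁ * c₁ ∧ u = a₂ * c₂ := by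
  by_cases hv : v = 0
  · subst hv
    rcases mul_eq_zero.mp (h.symm.trans (mul_zero u)) with rfl | rfl
    · exact ⟨0, u, c, 1, by simp, by simp, by simp, by simp⟩
    · exact ⟨a, 1, 0, u, by simp, by simp, by simp, by simp⟩
  obtain ⟨a₁, c₁, ⟨a₂, rfl⟩, ⟨c₂, rfl⟩, rfl⟩ :=
    exists_dvd_and_dvd_of_dvd_mul (show v ∣ a * c from ⟨u, by rw [← h, mul_comm]⟩)
  refine ⟨a₁, a₂, c₁, c₂, rfl, rfl, rfl, mul_right_cancel₀ hv ?_⟩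
  rw [h]
  ac_rfl

theorem Int.exists_add_sub_of_sq_sub_four_mul_eq_sq {a b c δ : ℤ}
    (hΔ : b ^ 2 - 4 * a * c = δ ^ 2) :
    ∃ u v : ℤ, b = u + v ∧ δ = u - v ∧ u * v = a * c := by
  have hsq : Even (b ^ 2 - δ ^ 2) := ⟨2 * a * c, by linear_combination hΔ⟩
  obtain ⟨v, hv⟩ : Even (b - δ) := by
    simpa [Int.even_sub, Int.even_pow] using hsq
  refine ⟨v + δ, v, by linarith, by ring, ?_⟩
  have hb : b = 2 * v + δ := by linarith
  subst hb
  exact mul_left_cancel₀ four_ne_zero (by linear_combination hΔ)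

theorem stmt_10_general (a b c δ : ℤ)
    (hΔ : b ^ 2 - 4 * a * c = δ ^ 2) :
    ∃ a₁ a₂ c₁ c₂ : ℤ, a = a₁ * a₂ ∧ c = c₁ * c₂ ∧
      b = a₁ * c₁ + a₂ * c₂ ∧ δ = a₂ * c₂ - a₁ * c₁ ∧
      ∀ m n : ℤ, a * m ^ 2 + b * m * n + c * n ^ 2 =
        (a₂ * m + c₁ * n) * (a₁ * m + c₂ * n) := by
  obtain ⟨u, v, rfl, rfl, huv⟩ := Int.exists_add_sub_of_sq_sub_four_mul_eq_sq hΔ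
  obtain ⟨a₁, a₂, c₁, c₂, rfl, rfl, rfl, rfl⟩ := exists_mul_eq_of_mul_eq_mul huv
  exact ⟨a₁, a₂, c₁, c₂, rfl, rfl, by ring, rfl, fun m n => by ring⟩

/-- Factorization of an integral binary quadratic form of positive square
discriminant into two integral linear forms. -/
theorem stmt_10 (a b c δ : ℤ) (ha : a ≠ 0) (hδ : 0 < δ)
    (hΔ : b ^ 2 - 4 * a * c = δ ^ 2) :
    ∃ a₁ a₂ c₁ c₂ : ℤ, a = a₁ * a₂ ∧ c = c₁ * c₂ ∧
      b = a₁ * c₁ + a₂ * c₂ ∧ δ = a₂ * c₂ - a₁ * c₁ ∧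
      ∀ m n : ℤ, a * m ^ 2 + b * m * n + c * n ^ 2 =
        (a₂ * m + c₁ * n) * (a₁ * m + c₂ * n) :=
  stmt_10_general a b c δ hΔ
end

section
/- Let q(m,n) = a m² + b m n + c n² be an integral binary quadratic form with a ≠ 0 and discriminant Δ = b² − 4ac = δ² for some positive integer δ, and let k be a nonzero integer. Then the number of pairs (m,n) ∈ ℤ² with q(m,n) = k is at most the number of integer divisors of k, i.e. at most #{u ∈ ℤ : u ∣ k} (divisors counted with both signs). -/
/-!
Since the discriminant is a square, the form splits over `ℤ` as a product `L₁ L₂` of two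
linear forms whose determinant squares to the discriminant, hence is nonzero. On the level
set `L₁ L₂ = k` with `k ≠ 0` the first factor `L₁` takes divisors of `k` as values, and it
determines the point: it fixes `L₂ = k / L₁` too, and `(L₁, L₂)` is injective.
-/

theorem Int.exists_linear_factors_of_discrim_eq_sq {a b c δ : ℤ}
    (h : b ^ 2 - 4 * a * c = δ ^ 2) :
    ∃ p q r s : ℤ, a = p * r ∧ b = p * s + q * r ∧ c = q * s := by
  rcases eq_or_ne a 0 with rfl | ha
  · exact ⟨0, 1, b, c, by ring, by ring, by ring⟩
  -- With `b - δ = 2e` the roots of `a t² + b t + c` are `-e / a` and `-(e + δ) / a`.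
  obtain ⟨e, he⟩ : Even (b - δ) := by
    have : Even ((b - δ) * (b + δ)) := ⟨2 * (a * c), by linear_combination h⟩
    rcases Int.even_mul.mp this with hev | hev
    · exact hev
    · rw [show b - δ = b + δ - 2 * δ by ring]
      exact hev.sub (even_two_mul δ)
  have hac : a * c = e * (e + δ) := by
    have : 4 * (a * c) = 4 * (e * (e + δ)) := by linear_combination -h + (b + δ + e + e) * he
    omega
  obtain ⟨p, r, ⟨s, rfl⟩, ⟨q, hq⟩, rfl⟩ :=
    exists_dvd_and_dvd_of_dvd_mul (⟨c, hac.symm⟩ : a ∣ e * (e + δ))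
  have hc : c = q * s := by
    apply mul_left_cancel₀ ha
    linear_combination hac + (p * s) * hq
  exact ⟨p, q, r, s, rfl, by linear_combination he + hq, hc⟩

theorem Int.eq_zero_of_linear_eq_zero {p q r s m n : ℤ} (hdet : p * s - q * r ≠ 0)
    (h₁ : p * m + q * n = 0) (h₂ : r * m + s * n = 0) : m = 0 ∧ n = 0 := by
  constructor
  · exact (mul_eq_zero.mp (by linear_combination s * h₁ - q * h₂ :
      (p * s - q * r) * m = 0)).resolve_left hdet
  · exact (mul_eq_zero.mp (by linear_combination p * h₂ - r * h₁ :
      (p * s - q * r) * n = 0)).resolve_left hdet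

theorem Int.encard_setOf_linear_mul_linear_eq_le {p q r s k : ℤ} (hdet : p * s - q * r ≠ 0)
    (hk : k ≠ 0) :
    {x : ℤ × ℤ | (p * x.1 + q * x.2) * (r * x.1 + s * x.2) = k}.encard ≤
      {u : ℤ | u ∣ k}.encard := by
  refine Set.encard_le_encard_of_injOn (f := fun x : ℤ × ℤ => p * x.1 + q * x.2)
    (fun x hx => ⟨_, hx.symm⟩) ?_
  rintro ⟨m₁, n₁⟩ hx ⟨m₂, n₂⟩ hy (h₁ : p * m₁ + q * n₁ = p * m₂ + q * n₂)
  simp only [Set.mem_ofPred_eq] at hx hy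
  have hL₁ : p * m₁ + q * n₁ ≠ 0 := left_ne_zero_of_mul (hx.symm ▸ hk)
  have h₂ : r * m₁ + s * n₁ = r * m₂ + s * n₂ :=
    mul_left_cancel₀ hL₁ (by rw [hx, h₁, hy])
  obtain ⟨hm, hn⟩ := Int.eq_zero_of_linear_eq_zero (m := m₁ - m₂) (n := n₁ - n₂) hdet
    (by linear_combination h₁) (by linear_combination h₂)
  simp only [Prod.mk.injEq]
  omega

theorem stmt_11_general (a b c δ k : ℤ) (hδ : 0 < δ)
    (hΔ : b ^ 2 - 4 * a * c = δ ^ 2) (hk : k ≠ 0) :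
    {x : ℤ × ℤ | a * x.1 ^ 2 + b * x.1 * x.2 + c * x.2 ^ 2 = k}.encard ≤
      {u : ℤ | u ∣ k}.encard := by
  obtain ⟨p, q, r, s, rfl, rfl, rfl⟩ := Int.exists_linear_factors_of_discrim_eq_sq hΔ
  have hdisc : (p * s - q * r) ^ 2 = δ ^ 2 := by linear_combination hΔ
  have hdet : p * s - q * r ≠ 0 :=
    (pow_ne_zero_iff two_ne_zero).mp (hdisc ▸ pow_ne_zero 2 hδ.ne')
  convert Int.encard_setOf_linear_mul_linear_eq_le hdet hk using 4 with x
  ring_nf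

/-- For a form of positive square discriminant with `a ≠ 0`, the number of
representations of a nonzero integer `k` is at most the number of integer
divisors of `k`. -/
theorem stmt_11 (a b c δ k : ℤ) (ha : a ≠ 0) (hδ : 0 < δ)
    (hΔ : b ^ 2 - 4 * a * c = δ ^ 2) (hk : k ≠ 0) :
    {x : ℤ × ℤ | a * x.1 ^ 2 + b * x.1 * x.2 + c * x.2 ^ 2 = k}.encard ≤
      {u : ℤ | u ∣ k}.encard :=
  stmt_11_general a b c δ k hδ hΔ hk
end

section
/- Let P(m,n) = a m² + b m n + c n² + d m + e n + f₀ be an integral bivariate quadratic polynomial with a ≠ 0 and discriminant Δ = b² − 4ac = δ² for a positive integer δ. Write a₁ = gcd((b−δ)/2, a), a₂ = a/a₁, c₁ = (b−δ)/(2a₁), c₂ = (b+δ)/(2a₂), g₁ = gcd(a₂, c₁), g₂ = gcd(a₁, c₂), α = 2cd − be, β = 2ae − bd, γ₁ = (a₂α + c₁β)/Δ, γ₂ = (a₁α + c₂β)/Δ (rational numbers), and Γ = (a e² − b d e + c d²)/Δ + f₀ ∈ ℚ. Then the equation P(m,n) = Γ has a solution (m,n) ∈ ℤ² if and only if γ₁/g₁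 is an integer or γ₂/g₂ is an integer. -/
/-!
With `L₁ = a₂ m + c₁ n`, `L₂ = a₁ m + c₂ n` the linear factors of the quadratic part and
`T₁ = d c₁ - e a₂`, `T₂ = e a₁ - d c₂`, one has the identity
`δ² (P(m,n) - Γ) = (δ L₁ - T₁) (δ L₂ - T₂)`. Hence `P(m,n) = Γ` is solvable iff one of the linear
equations `δ Lᵢ = Tᵢ` is, which by Bézout means `δ gᵢ ∣ Tᵢ`; and `γᵢ = Tᵢ / δ`, so this is
`γᵢ / gᵢ ∈ ℤ`. The factorization `a = a₁ a₂`, `c = c₁ c₂` comes from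
`((b - δ)/2) ((b + δ)/2) = a c` together with the coprimality of `a / a₁` and `c₁`.
-/

lemma even_sub_of_sq_sub_mul_four_eq_sq {b k δ : ℤ} (h : b ^ 2 - 4 * k = δ ^ 2) :
    Even (b - δ) := by
  have hev : Even (b ^ 2 - δ ^ 2) := ⟨2 * k, by linarith⟩
  simpa [Int.even_sub, Int.even_pow] using hev

lemma gcd_refinement_of_mul_eq_mul {r s a c a₁ a₂ c₁ c₂ : ℤ} (ha : a ≠ 0) (h : r * s = a * c)
    (ha₁ : a₁ = Int.gcd r a) (ha₂ : a₂ = a / a₁) (hc₁ : c₁ = r / a₁) (hc₂ : c₂ = s / a₂) :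
    0 < a₁ ∧ a = a₁ * a₂ ∧ c = c₁ * c₂ ∧ r = a₁ * c₁ ∧ s = a₂ * c₂ := by
  have hgcd : 0 < Int.gcd r a := Int.gcd_pos_of_ne_zero_right r ha
  have ha₁pos : 0 < a₁ := by rw [ha₁]; exact_mod_cast hgcd
  have hA : a = a₁ * a₂ := by
    rw [ha₂, Int.mul_ediv_cancel' (ha₁ ▸ Int.gcd_dvd_right r a)]
  have hR : r = a₁ * c₁ := by
    rw [hc₁, Int.mul_ediv_cancel' (ha₁ ▸ Int.gcd_dvd_left r a)]
  have hcop : IsCoprime a₂ c₁ := by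
    rw [Int.isCoprime_iff_gcd_eq_one, ha₂, hc₁, ha₁, Int.gcd_comm]
    exact Int.gcd_div_gcd_div_gcd hgcd
  have hsc : s * c₁ = a₂ * c := by
    apply mul_left_cancel₀ ha₁pos.ne'
    linear_combination h - s * hR + c * hA
  have hS : s = a₂ * c₂ := by
    rw [hc₂, Int.mul_ediv_cancel' (hcop.dvd_of_dvd_mul_right ⟨c, hsc⟩)]
  refine ⟨ha₁pos, hA, ?_, hR, hS⟩
  apply mul_left_cancel₀ ha
  linear_combination -h + s * hR + a₁ * c₁ * hS - c₁ * c₂ * hA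

lemma factorization_of_sq_discrim {a b c δ a₁ a₂ c₁ c₂ : ℤ} (ha : a ≠ 0)
    (hΔ : b ^ 2 - 4 * a * c = δ ^ 2)
    (ha₁ : a₁ = Int.gcd ((b - δ) / 2) a) (ha₂ : a₂ = a / a₁)
    (hc₁ : c₁ = (b - δ) / (2 * a₁)) (hc₂ : c₂ = (b + δ) / (2 * a₂)) :
    0 < a₁ ∧ a = a₁ * a₂ ∧ c = c₁ * c₂ ∧ b = a₁ * c₁ + a₂ * c₂ ∧ δ = a₂ * c₂ - a₁ * c₁ := by
  obtain ⟨r, hr⟩ := even_sub_of_sq_sub_mul_four_eq_sq (b := b) (δ := δ) (k := a * c) (by linarith)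
  have hbδ : b - δ = 2 * r := by rw [hr, two_mul]
  have hbδ' : b + δ = 2 * (r + δ) := by linarith
  have hrs : r * (r + δ) = a * c := by
    have h4 : 4 * (r * (r + δ)) = 4 * (a * c) := by
      linear_combination hΔ - (b + 2 * r + δ) * hbδ
    exact mul_left_cancel₀ four_ne_zero h4
  rw [hbδ, Int.mul_ediv_cancel_left _ two_ne_zero] at ha₁
  rw [hbδ, Int.mul_ediv_mul_of_pos _ _ two_pos] at hc₁
  rw [hbδ', Int.mul_ediv_mul_of_pos _ _ two_pos] at hc₂
  obtain ⟨ha₁pos, hA, hC, hR, hS⟩ := gcd_refinement_of_mul_eq_mul ha hrs ha₁ ha₂ hc₁ hc₂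
  exact ⟨ha₁pos, hA, hC, by linarith, by linarith⟩

lemma exists_intCast_eq_div_iff_dvd {T D : ℤ} (hD : D ≠ 0) :
    (∃ z : ℤ, (T : ℚ) / D = z) ↔ D ∣ T := by
  have hD' : (D : ℚ) ≠ 0 := Int.cast_ne_zero.mpr hD
  constructor
  · rintro ⟨z, hz⟩
    refine ⟨z, ?_⟩
    rw [div_eq_iff hD'] at hz
    exact_mod_cast hz.trans (mul_comm _ _)
  · rintro ⟨k, rfl⟩
    exact ⟨k, by push_cast; field_simp⟩

lemma exists_mul_linear_eq_iff_dvd (δ x y T : ℤ) :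
    (∃ m n : ℤ, δ * (x * m + y * n) = T) ↔ δ * Int.gcd x y ∣ T := by
  constructor
  · rintro ⟨m, n, rfl⟩
    exact mul_dvd_mul_left δ
      (dvd_add ((Int.gcd_dvd_left x y).mul_right m) ((Int.gcd_dvd_right x y).mul_right n))
  · rintro ⟨k, rfl⟩
    exact ⟨Int.gcdA x y * k, Int.gcdB x y * k, by linear_combination -δ * k * Int.gcd_eq_gcd_ab x y⟩

lemma exists_mul_linear_eq_iff {δ x y T g : ℤ} {γ : ℚ} (hδ : δ ≠ 0) (hx : x ≠ 0)
    (hg : g = Int.gcd x y) (hγ : γ = ((δ * T : ℤ) : ℚ) / ((δ ^ 2 : ℤ) : ℚ)) :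
    (∃ m n : ℤ, δ * (x * m + y * n) = T) ↔ ∃ z : ℤ, γ / (g : ℚ) = z := by
  have hg0 : g ≠ 0 := by
    rw [hg]; exact_mod_cast (Int.gcd_pos_of_ne_zero_left y hx).ne'
  have hγg : γ / g = (T : ℚ) / ((δ * g : ℤ) : ℚ) := by
    rw [hγ]; push_cast; field_simp
  rw [hγg, exists_intCast_eq_div_iff_dvd (mul_ne_zero hδ hg0), hg]
  exact exists_mul_linear_eq_iff_dvd δ x y T

lemma cast_eq_div_sq_add_iff {P Q f δ : ℤ} (hδ : δ ≠ 0) :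
    (P : ℚ) = (Q : ℚ) / ((δ ^ 2 : ℤ) : ℚ) + f ↔ δ ^ 2 * P = Q + δ ^ 2 * f := by
  have hδ' : (δ : ℚ) ≠ 0 := Int.cast_ne_zero.mpr hδ
  rw [← Int.cast_inj (α := ℚ)]
  push_cast
  constructor <;> intro h
  · rw [h]; field_simp
  · field_simp; linear_combination h

section Factorization

variable {R : Type*} [CommRing R] {a b c δ a₁ a₂ c₁ c₂ : R} (d e f₀ m n : R)

lemma mul_linear_factors_eq (hA : a = a₁ * a₂) (hB : b = a₁ * c₁ + a₂ * c₂) (hC : c = c₁ * c₂)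
    (hD : δ = a₂ * c₂ - a₁ * c₁) :
    (δ * (a₂ * m + c₁ * n) - (d * c₁ - e * a₂)) * (δ * (a₁ * m + c₂ * n) - (e * a₁ - d * c₂)) =
      δ ^ 2 * (a * m ^ 2 + b * m * n + c * n ^ 2 + d * m + e * n + f₀) -
        (a * e ^ 2 - b * d * e + c * d ^ 2 + δ ^ 2 * f₀) := by
  subst hA hB hC hD; ring

lemma first_factor_combination_eq (hA : a = a₁ * a₂) (hB : b = a₁ * c₁ + a₂ * c₂) (hC : c = c₁ * c₂)
    (hD : δ = a₂ * c₂ - a₁ * c₁) :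
    a₂ * (2 * c * d - b * e) + c₁ * (2 * a * e - b * d) = δ * (d * c₁ - e * a₂) := by
  subst hA hB hC hD; ring

lemma second_factor_combination_eq (hA : a = a₁ * a₂) (hB : b = a₁ * c₁ + a₂ * c₂)
    (hC : c = c₁ * c₂) (hD : δ = a₂ * c₂ - a₁ * c₁) :
    a₁ * (2 * c * d - b * e) + c₂ * (2 * a * e - b * d) = δ * (e * a₁ - d * c₂) := by
  subst hA hB hC hD; ring

end Factorization

/-- Solvability criterion for `P(m,n) = Γ`, `Γ = Q(e,-d)/Δ + f₀`, for a bivariate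
quadratic polynomial of positive square discriminant `Δ = δ²` with `a ≠ 0`:
`P(m,n) = Γ` has an integer solution iff `γ₁/g₁ ∈ ℤ` or `γ₂/g₂ ∈ ℤ`. -/
theorem stmt_13 (a b c d e f₀ δ : ℤ) (ha : a ≠ 0) (hδ : 0 < δ)
    (hΔ : b ^ 2 - 4 * a * c = δ ^ 2)
    (a₁ a₂ c₁ c₂ g₁ g₂ α β : ℤ) (γ₁ γ₂ Γ : ℚ)
    (ha₁ : a₁ = Int.gcd ((b - δ) / 2) a) (ha₂ : a₂ = a / a₁)
    (hc₁ : c₁ = (b - δ) / (2 * a₁)) (hc₂ : c₂ = (b + δ) / (2 * a₂))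
    (hg₁ : g₁ = Int.gcd a₂ c₁) (hg₂ : g₂ = Int.gcd a₁ c₂)
    (hα : α = 2 * c * d - b * e) (hβ : β = 2 * a * e - b * d)
    (hγ₁ : γ₁ = ((a₂ * α + c₁ * β : ℤ) : ℚ) / ((δ ^ 2 : ℤ) : ℚ))
    (hγ₂ : γ₂ = ((a₁ * α + c₂ * β : ℤ) : ℚ) / ((δ ^ 2 : ℤ) : ℚ))
    (hΓ : Γ = ((a * e ^ 2 - b * d * e + c * d ^ 2 : ℤ) : ℚ) / ((δ ^ 2 : ℤ) : ℚ) +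
      (f₀ : ℚ)) :
    (∃ m n : ℤ,
        ((a * m ^ 2 + b * m * n + c * n ^ 2 + d * m + e * n + f₀ : ℤ) : ℚ) = Γ) ↔
      (∃ z : ℤ, γ₁ / (g₁ : ℚ) = (z : ℚ)) ∨ (∃ z : ℤ, γ₂ / (g₂ : ℚ) = (z : ℚ)) := by
  obtain ⟨ha₁pos, hA, hC, hB, hD⟩ := factorization_of_sq_discrim ha hΔ ha₁ ha₂ hc₁ hc₂
  have ha₂0 : a₂ ≠ 0 := right_ne_zero_of_mul (hA ▸ ha)
  have hP : ∀ m n : ℤ,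
      ((a * m ^ 2 + b * m * n + c * n ^ 2 + d * m + e * n + f₀ : ℤ) : ℚ) = Γ ↔
        δ * (a₂ * m + c₁ * n) = d * c₁ - e * a₂ ∨ δ * (a₁ * m + c₂ * n) = e * a₁ - d * c₂ := by
    intro m n
    rw [hΓ, cast_eq_div_sq_add_iff hδ.ne', ← sub_eq_zero,
      ← mul_linear_factors_eq d e f₀ m n hA hB hC hD, mul_eq_zero, sub_eq_zero, sub_eq_zero]
  rw [hα, hβ, first_factor_combination_eq d e hA hB hC hD] at hγ₁
  rw [hα, hβ, second_factor_combination_eq d e hA hB hC hD] at hγ₂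
  simp only [hP, exists_or]
  exact or_congr (exists_mul_linear_eq_iff hδ.ne' ha₂0 hg₁ hγ₁)
    (exists_mul_linear_eq_iff hδ.ne' ha₁pos.ne' hg₂ hγ₂)
end

section
/- Let m be a nonzero integer which is not a perfect square. Write |m| = s·t² with s squarefree and t a positive integer, and write s = 2^j·r with r odd and j ∈ {0,1}. Then there exists a set S of residue classes modulo 8r with #S = 2·φ(r) (φ the Euler totient) such that for every odd prime p not dividing 2m, the Legendre symbol (m|p) equals −1 if and only if the class of p modulo 8r belongs to S; moreover for every such p, (m|p) = 1 if and only if the class of p modulo 8r belongs to a complementary set of exactly 2·φ(r) classes. -/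
/-!
Write `m = d t²` with `d = ±2ʲ r ≠ 1` squarefree. For `p ∤ 2m` one has `(m|p) = J(d|p)`, and
since `4|d|` divides `8r`, the Jacobi symbol `J(d|·)` is a character of `(ZMod (8r))ˣ`. It is
nontrivial: for `r = 1` we have `d ∈ {-1, ±2}` and `b = 3` or `5` gives `J(d|b) = -1`; for `r > 1`
take `b ≡ 1 mod 8` which is a nonresidue modulo one prime factor of `r` and `≡ 1` modulo the
others, so that `J(d|b) = J(r|b) = J(b|r) = -1` by reciprocity. The two fibres of a nontrivial
`±1`-valued character have the same size `φ(8r)/2 = 2φ(r)`.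
-/

open Finset
open scoped NumberTheorySymbols

theorem Nat.coprime_eight_left_of_odd {n : ℕ} (hn : Odd n) : Nat.Coprime 8 n :=
  Nat.Coprime.pow_left 3 (Nat.coprime_two_left.mpr hn)

theorem Nat.totient_eight_mul {n : ℕ} (hn : Odd n) : Nat.totient (8 * n) = 4 * Nat.totient n := by
  rw [Nat.totient_mul (Nat.coprime_eight_left_of_odd hn)]
  rfl

theorem MonoidHom.two_mul_card_fiber_eq_card {G : Type*} [Group G] [Fintype G] (χ : G →* ℤ)
    (hχ : ∃ g, χ g = -1) (x : ℤ) (hx : x = 1 ∨ x = -1) :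
    2 * #{g | χ g = x} = Fintype.card G := by
  have hval (g : G) : χ g = 1 ∨ χ g = -1 := Int.isUnit_iff.mp ((Group.isUnit g).map χ)
  have hfiber : #{g | χ g = 1} = #{g | χ g = -1} :=
    card_fiber_eq_of_mem_range χ ⟨1, map_one χ⟩ hχ
  have hsum : #{g | χ g = 1} + #{g | χ g = -1} = Fintype.card G := by
    rw [← card_univ, ← card_filter_add_card_filter_not (s := univ) (fun g => χ g = 1)]
    congr 2
    refine filter_congr fun g _ => ?_
    rcases hval g with h | h <;> simp [h]
  rcases hx with rfl | rfl <;> omega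

theorem ZMod.natCast_mem_map_val_iff {N : ℕ} [NeZero N] {n : ℕ} (hn : n.Coprime N)
    (s : Finset (ZMod N)ˣ) :
    (n : ZMod N) ∈ s.map ⟨Units.val, Units.val_injective⟩ ↔ ZMod.unitOfCoprime n hn ∈ s := by
  rw [mem_map]
  constructor
  · rintro ⟨u, hu, hun⟩
    rwa [← Units.val_injective (hun.trans (ZMod.coe_unitOfCoprime n hn).symm)]
  · exact fun h => ⟨_, h, ZMod.coe_unitOfCoprime n hn⟩

theorem legendreSym.mul_sq_of_not_dvd (p : ℕ) [Fact p.Prime] (a : ℤ) {t : ℤ}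
    (ht : ¬(p : ℤ) ∣ t) : legendreSym p (a * t ^ 2) = legendreSym p a := by
  rw [legendreSym.mul, legendreSym.sq_one' p (by rwa [Ne, ZMod.intCast_zmod_eq_zero_iff_dvd]),
    mul_one]

namespace jacobiSym

section Character

variable (a : ℤ) {N : ℕ}

theorem eq_of_modEq (hN : 4 * a.natAbs ∣ N) {b b' : ℕ} (hb : Odd b) (hb' : Odd b')
    (h : b ≡ b' [MOD N]) : J(a | b) = J(a | b') := by
  rw [mod_right a hb, mod_right a hb', h.of_dvd hN]

theorem odd_of_coprime (hN : 4 * a.natAbs ∣ N) {n : ℕ} (hn : n.Coprime N) : Odd n :=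
  Nat.coprime_two_right.mp <| hn.coprime_dvd_right <|
    (dvd_mul_right 2 2).trans <| (dvd_mul_right 4 _).trans hN

theorem val_unit_eq (hN : 4 * a.natAbs ∣ N) (u : (ZMod N)ˣ) {n : ℕ} (hn : Odd n)
    (h : (u : ZMod N).val ≡ n [MOD N]) : J(a | (u : ZMod N).val) = J(a | n) :=
  eq_of_modEq a hN (odd_of_coprime a hN (ZMod.val_coe_unit_coprime u)) hn h

def unitsHom (hN : 4 * a.natAbs ∣ N) : (ZMod N)ˣ →* ℤ where
  toFun u := J(a | (u : ZMod N).val)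
  map_one' := by
    rw [val_unit_eq a hN 1 odd_one, one_right]
    rw [Units.val_one, ← Nat.cast_one, ZMod.val_natCast]
    exact Nat.mod_modEq 1 N
  map_mul' u v := by
    have hu := odd_of_coprime a hN (ZMod.val_coe_unit_coprime u)
    have hv := odd_of_coprime a hN (ZMod.val_coe_unit_coprime v)
    rw [val_unit_eq a hN (u * v) (hu.mul hv), mul_right' a hu.pos.ne' hv.pos.ne']
    rw [Units.val_mul, ZMod.val_mul]
    exact Nat.mod_modEq _ N

theorem unitsHom_unitOfCoprime (hN : 4 * a.natAbs ∣ N) {n : ℕ} (hn : n.Coprime N) :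
    unitsHom a hN (ZMod.unitOfCoprime n hn) = J(a | n) := by
  refine val_unit_eq a hN _ (odd_of_coprime a hN hn) ?_
  rw [ZMod.coe_unitOfCoprime, ZMod.val_natCast]
  exact Nat.mod_modEq n N

theorem exists_residue_classes [NeZero N] (hN : 4 * a.natAbs ∣ N) {b : ℕ} (hb : b.Coprime N)
    (hab : J(a | b) = -1) :
    ∃ S T : Finset (ZMod N), Disjoint S T ∧
      2 * #S = Nat.totient N ∧ 2 * #T = Nat.totient N ∧
      ∀ n : ℕ, n.Coprime N →
        (J(a | n) = -1 ↔ (n : ZMod N) ∈ S) ∧ (J(a | n) = 1 ↔ (n : ZMod N) ∈ T) := by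
  set χ := unitsHom a hN
  let fiber (x : ℤ) : Finset (ZMod N) :=
    ({u | χ u = x} : Finset (ZMod N)ˣ).map ⟨Units.val, Units.val_injective⟩
  have hχ : ∃ u, χ u = -1 := ⟨_, (unitsHom_unitOfCoprime a hN hb).trans hab⟩
  have hcard (x : ℤ) (hx : x = 1 ∨ x = -1) : 2 * #(fiber x) = Nat.totient N := by
    rw [card_map, χ.two_mul_card_fiber_eq_card hχ x hx, ZMod.card_units_eq_totient]
  have hmem (x : ℤ) {n : ℕ} (hn : n.Coprime N) : J(a | n) = x ↔ (n : ZMod N) ∈ fiber x := by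
    rw [ZMod.natCast_mem_map_val_iff hn, mem_filter, unitsHom_unitOfCoprime a hN hn]
    simp
  refine ⟨fiber (-1), fiber 1, ?_, hcard _ (.inr rfl), hcard _ (.inl rfl),
    fun n hn => ⟨hmem _ hn, hmem _ hn⟩⟩
  rw [disjoint_map, disjoint_filter]
  intro u _ h
  rw [h]
  decide

end Character

theorem left_eq_one_of_mod_eight {ε : ℤ} (hε : ε = 1 ∨ ε = -1) {j b : ℕ} (hb : b % 8 = 1) :
    J(ε * 2 ^ j | b) = 1 := by
  have hbo : Odd b := Nat.odd_iff.mpr (by omega)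
  have h2 : J(2 | b) = 1 := by
    rw [at_two hbo, ZMod.χ₈_nat_mod_eight, hb]
    rfl
  rw [mul_left, pow_left, h2, one_pow, mul_one]
  rcases hε with rfl | rfl
  · exact one_left b
  · rw [at_neg_one hbo, ZMod.χ₄_nat_one_mod_four (by omega)]

theorem exists_natCast_left_eq_neg_one {r : ℕ} (hr : Odd r) (hsq : Squarefree r)
    (hr1 : r ≠ 1) : ∃ b : ℕ, J(b | r) = -1 := by
  set q := r.minFac
  have hq : q.Prime := Nat.minFac_prime hr1
  have : Fact q.Prime := ⟨hq⟩
  obtain ⟨c, hrc⟩ := Nat.minFac_dvd r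
  have hc0 : c ≠ 0 := by rintro rfl; rw [hrc, mul_zero] at hr; exact Nat.not_odd_zero hr
  have hqc : q.Coprime c := (Nat.squarefree_mul_iff.mp (hrc ▸ hsq)).1
  have hq2 : ringChar (ZMod q) ≠ 2 := by
    rw [ZMod.ringChar_zmod_n]
    rintro h
    exact Nat.not_even_iff_odd.mpr hr (even_iff_two_dvd.mpr (h ▸ Nat.minFac_dvd r))
  obtain ⟨x, hx⟩ := FiniteField.exists_nonsquare hq2
  obtain ⟨b, hbq, hbc⟩ := Nat.chineseRemainder hqc x.val 1
  have hjq : J(b | q) = -1 := by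
    rw [ZMod.nonsquare_iff_jacobiSym_eq_neg_one, Int.cast_natCast,
      (ZMod.natCast_eq_natCast_iff _ _ _).mpr hbq, ZMod.natCast_zmod_val]
    exact hx
  have hjc : J(b | c) = 1 := by
    rw [mod_left' (Int.natCast_modEq_iff.mpr hbc), Nat.cast_one, one_left]
  exact ⟨b, by rw [hrc, mul_right' _ hq.ne_zero hc0, hjq, hjc, mul_one]⟩

theorem exists_one_mod_eight_eq_neg_one {r : ℕ} (hr : Odd r) (hsq : Squarefree r)
    (hr1 : r ≠ 1) : ∃ b : ℕ, b % 8 = 1 ∧ J(r | b) = -1 := by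
  obtain ⟨b₀, hb₀⟩ := exists_natCast_left_eq_neg_one hr hsq hr1
  obtain ⟨b, hb8, hbr⟩ := Nat.chineseRemainder (Nat.coprime_eight_left_of_odd hr) 1 b₀
  have hb8 : b % 8 = 1 := hb8
  refine ⟨b, hb8, ?_⟩
  rw [quadratic_reciprocity_one_mod_four' hr (by omega),
    mod_left' (Int.natCast_modEq_iff.mpr hbr), hb₀]

theorem exists_coprime_eq_neg_one {ε : ℤ} (hε : ε = 1 ∨ ε = -1) {j r : ℕ} (hj : j ≤ 1)
    (hr : Odd r) (hsq : Squarefree r) (hd : ε * 2 ^ j * r ≠ 1) :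
    ∃ b : ℕ, b.Coprime (8 * r) ∧ J(ε * 2 ^ j * r | b) = -1 := by
  rcases eq_or_ne r 1 with rfl | hr1
  · interval_cases j <;> rcases hε with rfl | rfl <;> norm_num at hd
    exacts [⟨3, by norm_num, by norm_num⟩, ⟨5, by norm_num, by norm_num⟩,
      ⟨5, by norm_num, by norm_num⟩]
  obtain ⟨b, hb8, hbr⟩ := exists_one_mod_eight_eq_neg_one hr hsq hr1
  have hrb : Nat.Coprime r b := by
    rw [Nat.Coprime, ← Int.gcd_natCast_natCast]
    by_contra h
    have : J(r | b) = 0 := eq_zero_iff.mpr ⟨by omega, h⟩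
    omega
  have h8b : Nat.Coprime 8 b := Nat.coprime_eight_left_of_odd (Nat.odd_iff.mpr (by omega))
  refine ⟨b, (h8b.mul_left hrb).symm, ?_⟩
  rw [mul_left, left_eq_one_of_mod_eight hε hb8, one_mul, hbr]

end jacobiSym

theorem stmt_15_general (m s t : ℤ) (j r : ℕ)
    (hns : ¬∃ u : ℤ, u ^ 2 = m)
    (hdecomp : |m| = s * t ^ 2) (hs : Squarefree s)
    (hj : j ≤ 1) (hr : Odd r) (hsr : s = 2 ^ j * (r : ℤ)) :
    ∃ S T : Finset (ZMod (8 * r)), Disjoint S T ∧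
      S.card = 2 * Nat.totient r ∧ T.card = 2 * Nat.totient r ∧
      ∀ p : ℕ, ∀ hp : p.Prime, Odd p → ¬((p : ℤ) ∣ 2 * m) →
        ((@legendreSym p ⟨hp⟩ m = -1 ↔ ((p : ℕ) : ZMod (8 * r)) ∈ S) ∧
         (@legendreSym p ⟨hp⟩ m = 1 ↔ ((p : ℕ) : ZMod (8 * r)) ∈ T)) := by
  obtain ⟨ε, hε, hmε⟩ : ∃ ε : ℤ, (ε = 1 ∨ ε = -1) ∧ m = ε * |m| := by
    rcases abs_choice m with h | h
    · exact ⟨1, .inl rfl, by rw [h, one_mul]⟩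
    · exact ⟨-1, .inr rfl, by rw [h, neg_one_mul, neg_neg]⟩
  set d := ε * 2 ^ j * (r : ℤ)
  have hmd : m = d * t ^ 2 := by rw [hmε, hdecomp, hsr]; ring
  have hd1 : d ≠ 1 := fun h => hns ⟨t, by rw [hmd, h, one_mul]⟩
  have hrsq : Squarefree r :=
    Int.squarefree_natCast.mp (hs.squarefree_of_dvd ⟨2 ^ j, by rw [hsr, mul_comm]⟩)
  have hdN : 4 * d.natAbs ∣ 8 * r := by
    have hd : d.natAbs = 2 ^ j * r := by
      rcases hε with rfl | rfl <;> simp [d, Int.natAbs_mul, Int.natAbs_pow]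
    rw [hd, ← mul_assoc]
    exact Nat.mul_dvd_mul_right (by interval_cases j <;> norm_num) r
  have : NeZero (8 * r) := ⟨by have := hr.pos; omega⟩
  obtain ⟨b, hb, hdb⟩ := jacobiSym.exists_coprime_eq_neg_one hε hj hr hrsq hd1
  obtain ⟨S, T, hST, hS, hT, hmem⟩ := jacobiSym.exists_residue_classes d hdN hb hdb
  rw [Nat.totient_eight_mul hr] at hS hT
  refine ⟨S, T, hST, by omega, by omega, fun p hp hpodd hp2m => ?_⟩
  have : Fact p.Prime := ⟨hp⟩
  have hpm : ¬(p : ℤ) ∣ m := fun h => hp2m (h.mul_left 2)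
  have hpr : p.Coprime r := (Nat.Prime.coprime_iff_not_dvd hp).mpr fun h => hpm <|
    (Int.natCast_dvd_natCast.mpr h).trans ⟨ε * 2 ^ j * t ^ 2, by rw [hmd]; ring⟩
  rw [hmd, legendreSym.mul_sq_of_not_dvd p d fun h => hpm (h.trans ⟨d * t, by rw [hmd]; ring⟩),
    jacobiSym.legendreSym.to_jacobiSym]
  exact hmem p ((Nat.coprime_eight_left_of_odd hpodd).symm.mul_right hpr)

/-- For a fixed nonsquare integer `m` with `|m| = s t²`, `s = 2^j r` squarefree,
`r` odd, the primes `p ∤ 2m` with `(m|p) = -1` are exactly those lying in a set of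
`2 φ(r)` residue classes mod `8r`, and those with `(m|p) = 1` are exactly those in
a complementary set of `2 φ(r)` classes. -/
theorem stmt_15 (m s t : ℤ) (j r : ℕ)
    (hm : m ≠ 0) (hns : ¬∃ u : ℤ, u ^ 2 = m)
    (hdecomp : |m| = s * t ^ 2) (hs : Squarefree s) (ht : 0 < t)
    (hj : j ≤ 1) (hr : Odd r) (hsr : s = 2 ^ j * (r : ℤ)) :
    ∃ S T : Finset (ZMod (8 * r)), Disjoint S T ∧
      S.card = 2 * Nat.totient r ∧ T.card = 2 * Nat.totient r ∧
      ∀ p : ℕ, ∀ hp : p.Prime, Odd p → ¬((p : ℤ) ∣ 2 * m) →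
        ((@legendreSym p ⟨hp⟩ m = -1 ↔ ((p : ℕ) : ZMod (8 * r)) ∈ S) ∧
         (@legendreSym p ⟨hp⟩ m = 1 ↔ ((p : ℕ) : ZMod (8 * r)) ∈ T)) :=
  stmt_15_general m s t j r hns hdecomp hs hj hr hsr
end

section
/- Let 1 ≤ q < p < ∞ be real numbers and let λ > 0. Then there exists a nonnegative function f : ℤ → [0,∞) with ∑_{k∈ℤ} f(k)^p < ∞ but ∑_{n∈ℤ} ( ∑_{m∈ℤ, m≠0} f(m² + n²)/|m|^λ )^q = ∞ (sums in the extended nonnegative reals). In particular, for the phase polynomial P(m,n) = m² + n² there is no constant C with ‖I_λ f‖_q ≤ C‖f‖_p for all f ∈ ℓ^p(ℤ), for any p > q. -/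
open scoped ENNReal NNReal

noncomputable def Fw (q : ℝ) (k : ℤ) : ℝ≥0 :=
  if 2 ≤ k ∧ ((Nat.sqrt (k-1).toNat : ℤ))^2 = k - 1 then
    ((Nat.sqrt (k-1).toNat : ℝ≥0)) ^ (-(1/q)) else 0

lemma Fw_sq (q : ℝ) (N : ℕ) :
    Fw q ((N:ℤ)^2 + 1) = if 1 ≤ N then (N:ℝ≥0) ^ (-(1/q)) else 0 := by
  have h1 : ((N:ℤ)^2 + 1 - 1).toNat = N^2 := by
    have : (N:ℤ)^2 + 1 - 1 = ((N^2 : ℕ) : ℤ) := by push_cast; ring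
    rw [this, Int.toNat_natCast]
  have h2 : Nat.sqrt (((N:ℤ)^2 + 1 - 1).toNat) = N := by rw [h1, Nat.sqrt_eq']
  unfold Fw
  rw [h2]
  by_cases hN : 1 ≤ N
  · rw [if_pos, if_pos hN]
    constructor
    · have : (1:ℤ) ≤ (N:ℤ) := by exact_mod_cast hN
      nlinarith
    · push_cast; ring
  · have hN0 : N = 0 := by omega
    subst hN0
    simp [NNReal.zero_rpow]

lemma Fw_supp (q : ℝ) (k : ℤ) (h : Fw q k ≠ 0) :
    ∃ N : ℕ, ((N:ℤ)^2 + 1) = k := by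
  unfold Fw at h
  by_cases hc : 2 ≤ k ∧ ((Nat.sqrt (k-1).toNat : ℤ))^2 = k - 1
  · exact ⟨Nat.sqrt (k-1).toNat, by omega⟩
  · rw [if_neg hc] at h; exact absurd rfl h

/-- No off-diagonal `(p,q)` estimate with `q < p` for the discrete fractional
integral along `P(m,n) = m² + n²`: there is `f ∈ ℓ^p` with `‖I_λ f‖_q = ∞`. -/
theorem stmt_17 (p q lam : ℝ) (hq : 1 ≤ q) (hqp : q < p) (hlam : 0 < lam) :
    ∃ f : ℤ → ℝ≥0,
      (∑' k : ℤ, ((f k : ℝ≥0∞)) ^ p) < ⊤ ∧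
      ∑' n : ℤ,
          (∑' m : {m : ℤ // m ≠ 0},
              (f ((m : ℤ) ^ 2 + n ^ 2) : ℝ≥0∞) /
                (((m : ℤ).natAbs : ℝ≥0∞)) ^ lam) ^ q = ⊤ := by
  have hq0 : (0:ℝ) < q := lt_of_lt_of_le one_pos hq
  have hp0 : (0:ℝ) < p := lt_trans hq0 hqp
  refine ⟨Fw q, ?_, ?_⟩
  · -- finiteness
    have hinj : Function.Injective (fun N : ℕ => ((N:ℤ)^2 + 1)) := by
      intro a b hab
      simp only at hab
      have h2 : (a:ℤ)^2 = (b:ℤ)^2 := by omega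
      have : (a:ℤ) = b := by nlinarith [Int.ofNat_nonneg a, Int.ofNat_nonneg b]
      exact_mod_cast this
    have hsupp : Function.support (fun k : ℤ => ((Fw q k : ℝ≥0∞)) ^ p)
        ⊆ Set.range (fun N : ℕ => ((N:ℤ)^2 + 1)) := by
      intro k hk
      simp only [Function.mem_support] at hk
      have : Fw q k ≠ 0 := by
        intro h0
        apply hk
        rw [h0]
        simp [ENNReal.zero_rpow_of_pos hp0]
      obtain ⟨N, hN⟩ := Fw_supp q k this
      exact ⟨N, hN⟩
    rw [← Function.Injective.tsum_eq hinj hsupp]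
    have heq : ∀ N : ℕ, ((Fw q ((N:ℤ)^2+1) : ℝ≥0∞)) ^ p
        = ((if 1 ≤ N then (N:ℝ≥0) ^ (-(1/q)) else 0)^p : ℝ≥0) := by
      intro N
      rw [Fw_sq, ENNReal.coe_rpow_of_nonneg _ hp0.le]
    simp only [heq]
    rw [lt_top_iff_ne_top, ENNReal.tsum_coe_ne_top_iff_summable]
    have hsum : Summable (fun N : ℕ => ((N:ℝ) ^ (-(p/q)))) := by
      rw [Real.summable_nat_rpow, neg_lt_neg_iff, lt_div_iff₀ hq0]
      linarith
    rw [← NNReal.summable_coe]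
    apply hsum.congr
    intro N
    by_cases hN : 1 ≤ N
    · rw [if_pos hN]
      rw [NNReal.coe_rpow, NNReal.coe_rpow, NNReal.coe_natCast,
        ← Real.rpow_mul (Nat.cast_nonneg N)]
      congr 1
      field_simp
    · have : N = 0 := by omega
      subst this
      rw [if_neg hN]
      simp [Real.zero_rpow (neg_ne_zero.mpr (div_pos hp0 hq0).ne'), NNReal.zero_rpow hp0.ne']
  · -- divergence
    have key : ∀ n : ℤ, ((Fw q (1 + n^2) : ℝ≥0∞)) ≤
        ∑' m : {m : ℤ // m ≠ 0},
          (Fw q ((m : ℤ) ^ 2 + n ^ 2) : ℝ≥0∞) / (((m : ℤ).natAbs : ℝ≥0∞)) ^ lam := by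
      intro n
      have h1 := ENNReal.le_tsum (f := fun m : {m : ℤ // m ≠ 0} =>
        (Fw q ((m : ℤ) ^ 2 + n ^ 2) : ℝ≥0∞) / (((m : ℤ).natAbs : ℝ≥0∞)) ^ lam)
        ⟨1, one_ne_zero⟩
      simpa using h1
    have hmono : ∑' n : ℤ, ((Fw q (1 + n^2) : ℝ≥0∞))^q ≤
        ∑' n : ℤ,
          (∑' m : {m : ℤ // m ≠ 0},
              (Fw q ((m : ℤ) ^ 2 + n ^ 2) : ℝ≥0∞) /
                (((m : ℤ).natAbs : ℝ≥0∞)) ^ lam) ^ q :=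
      ENNReal.tsum_le_tsum fun n => ENNReal.rpow_le_rpow (key n) hq0.le
    have hcomp : ∑' N : ℕ, ((Fw q (1 + ((N:ℤ))^2) : ℝ≥0∞))^q ≤
        ∑' n : ℤ, ((Fw q (1 + n^2) : ℝ≥0∞))^q :=
      ENNReal.tsum_comp_le_tsum_of_injective (fun a b h => by exact_mod_cast h : Function.Injective (Nat.cast : ℕ → ℤ))
        (fun n : ℤ => ((Fw q (1 + n^2) : ℝ≥0∞))^q)
    have htop : ∑' N : ℕ, ((Fw q (1 + ((N:ℤ))^2) : ℝ≥0∞))^q = ⊤ := by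
      have heq : ∀ N : ℕ, ((Fw q (1 + ((N:ℤ))^2) : ℝ≥0∞))^q
          = ((if 1 ≤ N then (N:ℝ≥0) ^ (-(1/q)) else 0)^q : ℝ≥0) := by
        intro N
        rw [add_comm, Fw_sq, ENNReal.coe_rpow_of_nonneg _ hq0.le]
      simp only [heq]
      by_contra hne
      rw [← Ne, ENNReal.tsum_coe_ne_top_iff_summable] at hne
      have hS := hne
      have hS2 : Summable (fun N : ℕ => ((N:ℝ) ^ (-1 : ℝ))) := by
        rw [← NNReal.summable_coe] at hS
        apply hS.congr
        intro N
        by_cases hN : 1 ≤ N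
        · rw [if_pos hN, NNReal.coe_rpow, NNReal.coe_rpow, NNReal.coe_natCast,
            ← Real.rpow_mul (Nat.cast_nonneg N)]
          congr 1
          field_simp
        · have : N = 0 := by omega
          subst this
          rw [if_neg hN]
          simp [Real.zero_rpow (by norm_num : (-1:ℝ) ≠ 0), NNReal.zero_rpow hq0.ne']
      rw [Real.summable_nat_rpow] at hS2
      linarith
    rw [eq_top_iff]
    calc (⊤ : ℝ≥0∞) = ∑' N : ℕ, ((Fw q (1 + ((N:ℤ))^2) : ℝ≥0∞))^q := htop.symm
      _ ≤ ∑' n : ℤ, ((Fw q (1 + n^2) : ℝ≥0∞))^q := hcomp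
      _ ≤ _ := hmono
end

section
/- Let 1 ≤ p < ∞ and 0 < λ < 1 − 1/p. Then there exists a nonnegative function f : ℤ → [0,∞) with ∑_{k∈ℤ} f(k)^p < ∞ but ∑_{m∈ℤ, m≠0} f(m² + 1)/|m|^λ = ∞ (sums in the extended nonnegative reals). In particular, for the phase polynomial P(m,n) = m² + n² and any 1 ≤ q ≤ ∞, no estimate ‖I_λ f‖_q ≤ C‖f‖_p for all f ∈ ℓ^p(ℤ) can hold with λ < 1 − 1/p, since I_λ f(1) = ∞ for this f. -/
open scoped ENNReal NNReal

/-- Sharpness of the exponent `λ = 1 - 1/p`: for `0 < λ < 1 - 1/p` there is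
`f ∈ ℓ^p` for which the discrete fractional integral along `m² + n²` diverges
at `n = 1`. -/
theorem stmt_18 (p lam : ℝ) (hp : 1 ≤ p) (hlam0 : 0 < lam)
    (hlam : lam < 1 - 1 / p) :
    ∃ f : ℤ → ℝ≥0,
      (∑' k : ℤ, ((f k : ℝ≥0∞)) ^ p) < ⊤ ∧
      ∑' m : {m : ℤ // m ≠ 0},
          (f ((m : ℤ) ^ 2 + 1) : ℝ≥0∞) /
            (((m : ℤ).natAbs : ℝ≥0∞)) ^ lam = ⊤ := by
  have hp0 : (0:ℝ) < p := lt_of_lt_of_le one_pos hp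
  have h1p : 0 < 1/p := by positivity
  obtain ⟨α, hα⟩ : ∃ α : ℝ, α = 1 - lam := ⟨_, rfl⟩
  have hα0 : 0 < α := by rw [hα]; linarith
  have hαp : 1 < α * p := by
    have h1 : 1/p < α := by rw [hα]; linarith
    calc 1 = (1/p) * p := by field_simp
    _ < α * p := mul_lt_mul_of_pos_right h1 hp0
  obtain ⟨e, he⟩ : ∃ e : ℕ → ℤ, ∀ j, e j = ((j:ℤ)+1)^2 + 1 := ⟨_, fun _ => rfl⟩
  have hinj : Function.Injective e := by
    have hm : StrictMono e := by
      intro a b h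
      rw [he, he]
      have : (a:ℤ) < b := by exact_mod_cast h
      nlinarith
    exact hm.injective
  obtain ⟨g, hg⟩ : ∃ g : ℕ → ℝ≥0, ∀ j, g j = ((j:ℝ≥0)+1) ^ (-α) := ⟨_, fun _ => rfl⟩
  obtain ⟨F, hF⟩ : ∃ F : ℤ → ℝ≥0, F = Function.extend e g 0 := ⟨_, rfl⟩
  refine ⟨F, ?_, ?_⟩
  · have hzero : ∀ k ∉ Set.range e, F k = 0 := by
      intro k hk
      rw [hF, Function.extend_apply' _ _ _ (by simpa [Set.range] using hk)]
      rfl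
    have hsupp : ∀ k ∉ Set.range e, ((F k : ℝ≥0∞)) ^ p = 0 := by
      intro k hk
      rw [hzero k hk]
      simp [ENNReal.zero_rpow_of_pos hp0]
    have heq : (∑' k : ℤ, ((F k : ℝ≥0∞)) ^ p) = ∑' j : ℕ, ((F (e j) : ℝ≥0∞)) ^ p := by
      rw [← tsum_range (fun k : ℤ => ((F k : ℝ≥0∞)) ^ p) hinj]
      exact (tsum_subtype_eq_of_support_subset
        (by intro k hk; by_contra hr; exact hk (hsupp k hr))).symm
    have hterm : ∀ j : ℕ, ((F (e j) : ℝ≥0∞)) ^ p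
        = ((((j:ℝ≥0)+1) ^ (-(α*p)) : ℝ≥0) : ℝ≥0∞) := by
      intro j
      rw [hF, hinj.extend_apply]
      rw [← ENNReal.coe_rpow_of_nonneg _ hp0.le]
      congr 1
      rw [hg, ← NNReal.rpow_mul]
      congr 1
      ring
    rw [heq, tsum_congr hterm]
    have h1 : Summable (fun n : ℕ => (n:ℝ≥0) ^ (-(α*p))) :=
      NNReal.summable_rpow.2 (by linarith)
    have h2 := (NNReal.summable_nat_add_iff (f := fun n : ℕ => (n:ℝ≥0) ^ (-(α*p))) 1).2 h1
    have h3 : Summable (fun j : ℕ => (((j:ℝ≥0)+1) ^ (-(α*p)) : ℝ≥0)) := by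
      simpa using h2
    exact lt_top_iff_ne_top.2 (ENNReal.tsum_coe_ne_top_iff_summable.2 h3)
  · have hι : Function.Injective (fun j : ℕ => (⟨(j:ℤ)+1, by omega⟩ : {m : ℤ // m ≠ 0})) := by
      intro a b h
      simpa using h
    refine top_le_iff.1 ?_
    refine le_trans ?_ (ENNReal.tsum_comp_le_tsum_of_injective hι
      (fun m => (F ((m : ℤ)^2 + 1) : ℝ≥0∞) / (((m : ℤ).natAbs : ℝ≥0∞)) ^ lam))
    have hterm : ∀ j : ℕ,
        (F (((j:ℤ)+1)^2 + 1) : ℝ≥0∞) / ((((j:ℤ)+1).natAbs : ℝ≥0∞)) ^ lam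
        = ((((j:ℝ≥0)+1) ^ (-(1:ℝ)) : ℝ≥0) : ℝ≥0∞) := by
      intro j
      have h1 : (((j:ℤ)+1)^2 + 1) = e j := (he j).symm
      rw [h1, hF, hinj.extend_apply]
      have h2 : ((((j:ℤ)+1).natAbs : ℕ) : ℝ≥0∞) = (j:ℝ≥0∞)+1 := by
        have h4 : ((j:ℤ)+1).natAbs = j + 1 := by omega
        rw [h4]; push_cast; ring
      rw [h2]
      have h3 : ((g j : ℝ≥0∞)) = ((j:ℝ≥0∞)+1) ^ (-α) := by
        rw [hg, ENNReal.coe_rpow_of_ne_zero (by positivity)]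
        push_cast
        ring_nf
      have h6 : (j:ℝ≥0∞) + 1 ≠ 0 := by
        simp
      have h7 : (j:ℝ≥0∞) + 1 ≠ ⊤ := by
        simp [ENNReal.add_ne_top]
      rw [h3, ← ENNReal.rpow_sub _ _ h6 h7]
      have h8 : -α - lam = -(1:ℝ) := by rw [hα]; ring
      rw [h8]
      rw [ENNReal.coe_rpow_of_ne_zero (by positivity)]
      push_cast
      ring_nf
    have hle : (∑' j : ℕ, ((((j:ℝ≥0)+1) ^ (-(1:ℝ)) : ℝ≥0) : ℝ≥0∞))
        ≤ ∑' j : ℕ, (F (((j:ℤ)+1)^2 + 1) : ℝ≥0∞) /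
            ((((j:ℤ)+1).natAbs : ℝ≥0∞)) ^ lam :=
      le_of_eq (tsum_congr hterm).symm
    refine le_trans ?_ hle
    rw [top_le_iff]
    by_contra h
    have hsum : Summable (fun j : ℕ => (((j:ℝ≥0)+1) ^ (-(1:ℝ)) : ℝ≥0)) :=
      ENNReal.tsum_coe_ne_top_iff_summable.1 h
    have h5 : Summable (fun n : ℕ => (n:ℝ≥0) ^ (-(1:ℝ))) := by
      refine (NNReal.summable_nat_add_iff (f := fun n : ℕ => (n:ℝ≥0) ^ (-(1:ℝ))) 1).1 ?_
      simpa using hsum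
    have := NNReal.summable_rpow.1 h5
    linarith
end
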